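/- (Corollary 1, equal-size strata.) Let N = H·m with integers H ≥ 1 and m ≥ 2, and let Z_1,…,Z_N be independent square-integrable real random variables with means μ_i = E[Z_i] and variances v_i = Var(Z_i). Among all partitions of {1,…,N} into H strata D_1,…,D_H each of size exactly m, a partition minimizes the expected within-strata weighted variance E[Σ_{h=1}^H (1/H) S²_{Z_h}] if and only if it minimizes the k-means objective Σ_{h=1}^H min_{c_h ∈ ℝ} Σ_{i∈D_h} (μ_i − c_h)² on the means μ_1,…,μ_N; indeed E[Σ_h (1/H) S²_{Z_h}] = (1/N) Σ_{i=1}^N v_i + (m/(N(m−1))) Σ_{h=1}^H Σ_{i∈D_h} (μ_i − μ̄_{D_h})², and for each stratum Σ_{i∈D_h} (μ_i − μ̄_{D_h})² = min_{c∈ℝ} Σ_{i∈D_h} (μ_i − c)². -/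

import Mathlib

open MeasureTheory ProbabilityTheory Finset
open scoped Classical

/-!
Writing `S_h = ∑_{i ∈ D_h} (Z_i - Z̄_h)² = ∑ Z_i² - (∑ Z_i)² / m`, independence gives
`E[(∑ Z_i)²] = ∑ v_i + (∑ μ_i)²`, so `E[S_h] = (1 - 1/m) ∑ v_i + ∑ (μ_i - μ̄_h)²`. Summing over
the strata, the expected weighted variance is a constant plus a positive multiple of the
within-strata scatter of the means, and that scatter is the k-means objective because the
mean of a finite set of reals minimises its sum of squared deviations.
-/

section FinsetMean

variable {ι : Type*} (D : Finset ι) (f : ι → ℝ)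

lemma card_mul_mean : (#D : ℝ) * (1 / #D * ∑ i ∈ D, f i) = ∑ i ∈ D, f i := by
  rcases D.eq_empty_or_nonempty with rfl | hD
  · simp
  · have : (#D : ℝ) ≠ 0 := by exact_mod_cast hD.card_pos.ne'
    field_simp

lemma sum_sub_mean_eq_zero : ∑ i ∈ D, (f i - 1 / #D * ∑ j ∈ D, f j) = 0 := by
  rw [sum_sub_distrib, sum_const, nsmul_eq_mul, card_mul_mean, sub_self]

lemma sum_sq_sub_eq_sum_sq_sub_mean_add (c : ℝ) :
    ∑ i ∈ D, (f i - c) ^ 2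
      = ∑ i ∈ D, (f i - 1 / #D * ∑ j ∈ D, f j) ^ 2
        + #D * (1 / #D * ∑ j ∈ D, f j - c) ^ 2 := by
  set μ := 1 / (#D : ℝ) * ∑ j ∈ D, f j
  calc ∑ i ∈ D, (f i - c) ^ 2
      = ∑ i ∈ D, ((f i - μ) ^ 2 + 2 * (μ - c) * (f i - μ) + (μ - c) ^ 2) :=
        sum_congr rfl fun _ _ => by ring
    _ = ∑ i ∈ D, (f i - μ) ^ 2 + 2 * (μ - c) * ∑ i ∈ D, (f i - μ) + #D * (μ - c) ^ 2 := by
        rw [sum_add_distrib, sum_add_distrib, ← mul_sum, sum_const, nsmul_eq_mul]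
    _ = ∑ i ∈ D, (f i - μ) ^ 2 + #D * (μ - c) ^ 2 := by
        rw [sum_sub_mean_eq_zero, mul_zero, add_zero]

lemma sum_sq_sub_mean_eq_iInf :
    ∑ i ∈ D, (f i - 1 / #D * ∑ j ∈ D, f j) ^ 2 = ⨅ c : ℝ, ∑ i ∈ D, (f i - c) ^ 2 := by
  refine le_antisymm (le_ciInf fun c => ?_) (ciInf_le ?_ _)
  · rw [sum_sq_sub_eq_sum_sq_sub_mean_add D f c]
    exact le_add_of_nonneg_right (by positivity)
  · exact ⟨0, by rintro _ ⟨c, rfl⟩; positivity⟩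

lemma sum_sq_sub_mean_eq_sum_sq_sub :
    ∑ i ∈ D, (f i - 1 / #D * ∑ j ∈ D, f j) ^ 2
      = ∑ i ∈ D, f i ^ 2 - 1 / #D * (∑ i ∈ D, f i) ^ 2 := by
  have h := sum_sq_sub_eq_sum_sq_sub_mean_add D f 0
  simp only [sub_zero] at h
  rw [h, sq (1 / (#D : ℝ) * _), ← mul_assoc, card_mul_mean]
  ring

end FinsetMean

section SampleVariance

variable {Ω ι : Type*} [MeasurableSpace Ω] {P : Measure Ω} [IsProbabilityMeasure P]

lemma integral_sq_eq_variance_add_sq {X : Ω → ℝ} (hX : MemLp X 2 P) :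
    ∫ ω, X ω ^ 2 ∂P = variance X P + (∫ ω, X ω ∂P) ^ 2 := by
  rw [variance_eq_sub hX, sub_add_cancel]
  rfl

lemma integral_sum_sq_sub_mean {Z : ι → Ω → ℝ} (D : Finset ι)
    (hL2 : ∀ i ∈ D, MemLp (Z i) 2 P) (hindep : Set.Pairwise D fun i j => Z i ⟂ᵢ[P] Z j) :
    ∫ ω, ∑ i ∈ D, (Z i ω - 1 / #D * ∑ j ∈ D, Z j ω) ^ 2 ∂P
      = (1 - 1 / #D) * ∑ i ∈ D, variance (Z i) P
        + ∑ i ∈ D, (∫ ω, Z i ω ∂P - 1 / #D * ∑ j ∈ D, ∫ ω, Z j ω ∂P) ^ 2 := by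
  have hS : MemLp (fun ω => ∑ i ∈ D, Z i ω) 2 P := memLp_finsetSum D hL2
  have hsq_S : ∫ ω, (∑ i ∈ D, Z i ω) ^ 2 ∂P
      = ∑ i ∈ D, variance (Z i) P + (∑ i ∈ D, ∫ ω, Z i ω ∂P) ^ 2 := by
    rw [integral_sq_eq_variance_add_sq hS, ← IndepFun.variance_sum hL2 hindep, sum_fn,
      integral_finsetSum D fun i hi => (hL2 i hi).integrable one_le_two]
  simp_rw [sum_sq_sub_mean_eq_sum_sq_sub D]
  rw [integral_sub (integrable_finsetSum D fun i hi => (hL2 i hi).integrable_sq)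
      (hS.integrable_sq.const_mul _),
    integral_const_mul, integral_finsetSum D fun i hi => (hL2 i hi).integrable_sq, hsq_S,
    sum_congr rfl fun i hi => integral_sq_eq_variance_add_sq (hL2 i hi), sum_add_distrib]
  ring

end SampleVariance

section Stratification

variable {Ω ι κ : Type*} [MeasurableSpace Ω] {P : Measure Ω} [IsProbabilityMeasure P]
  [Fintype ι] [Fintype κ] [DecidableEq κ]

lemma integral_weighted_stratified_sample_variance {Z : ι → Ω → ℝ}
    (hL2 : ∀ i, MemLp (Z i) 2 P) (hindep : iIndepFun Z P) (st : ι → κ) {m : ℕ} (hm : 2 ≤ m)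
    (hst : ∀ h, #{i | st i = h} = m) :
    ∫ ω, ∑ h, 1 / (Fintype.card κ : ℝ) * (1 / ((m : ℝ) - 1) *
        ∑ i ∈ {i | st i = h}, (Z i ω - 1 / (m : ℝ) * ∑ j ∈ {i | st i = h}, Z j ω) ^ 2) ∂P
      = 1 / (Fintype.card ι : ℝ) * ∑ i, variance (Z i) P
        + (m : ℝ) / (Fintype.card ι * ((m : ℝ) - 1)) * ∑ h, ∑ i ∈ {i | st i = h},
            (∫ ω, Z i ω ∂P - 1 / (m : ℝ) * ∑ j ∈ {i | st i = h}, ∫ ω, Z j ω ∂P) ^ 2 := by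
  have hcard : (Fintype.card ι : ℝ) = Fintype.card κ * m := by
    rw [← card_univ, card_eq_sum_card_fiberwise (f := st) (t := univ) fun _ _ => mem_univ _]
    simp [hst]
  have hm1 : (m : ℝ) - 1 ≠ 0 := by
    have : (2 : ℝ) ≤ m := by exact_mod_cast hm
    linarith
  have hstratum (h : κ) := integral_sum_sq_sub_mean {i | st i = h}
    (fun i _ => hL2 i) (fun i _ j _ hij => hindep.indepFun hij)
  simp only [hst] at hstratum
  have hint (h : κ) : Integrable (fun ω => ∑ i ∈ {i | st i = h},
      (Z i ω - 1 / (m : ℝ) * ∑ j ∈ {i | st i = h}, Z j ω) ^ 2) P :=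
    integrable_finsetSum _ fun i _ =>
      ((hL2 i).sub ((memLp_finsetSum _ fun j _ => hL2 j).const_mul _)).integrable_sq
  rw [integral_finsetSum _ fun h _ => ((hint h).const_mul _).const_mul _]
  calc _ = ∑ h, 1 / (Fintype.card κ : ℝ) * (1 / ((m : ℝ) - 1) *
          ((1 - 1 / (m : ℝ)) * ∑ i ∈ {i | st i = h}, variance (Z i) P + ∑ i ∈ {i | st i = h},
            (∫ ω, Z i ω ∂P - 1 / (m : ℝ) * ∑ j ∈ {i | st i = h}, ∫ ω, Z j ω ∂P) ^ 2)) :=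
        sum_congr rfl fun h _ => by rw [integral_const_mul, integral_const_mul, hstratum]
    _ = ∑ h, (1 / (Fintype.card ι : ℝ) * ∑ i ∈ {i | st i = h}, variance (Z i) P
          + (m : ℝ) / (Fintype.card ι * ((m : ℝ) - 1)) * ∑ i ∈ {i | st i = h},
            (∫ ω, Z i ω ∂P - 1 / (m : ℝ) * ∑ j ∈ {i | st i = h}, ∫ ω, Z j ω ∂P) ^ 2) :=
        sum_congr rfl fun h _ => by
          have : (Fintype.card κ : ℝ) ≠ 0 := by exact_mod_cast (Fintype.card_pos_iff.2 ⟨h⟩).ne'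
          rw [hcard]
          field_simp
    _ = _ := by rw [sum_add_distrib, ← mul_sum, ← mul_sum, sum_fiberwise]

end Stratification

theorem kmeans_equal_size_strata_general
    {Ω : Type*} [MeasurableSpace Ω] (P : Measure Ω) [IsProbabilityMeasure P]
    (N H m : ℕ) (hH : 1 ≤ H) (hm : 2 ≤ m) (hNm : N = H * m)
    (Z : Fin N → Ω → ℝ)
    (hL2 : ∀ i, MemLp (Z i) 2 P)
    (hindep : iIndepFun Z P) :
    (let Dh : (Fin N → Fin H) → Fin H → Finset (Fin N) :=
       fun st h => univ.filter (fun i => st i = h)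
     let Good : (Fin N → Fin H) → Prop := fun st => ∀ h, (Dh st h).card = m
     let μZ : Fin N → ℝ := fun i => ∫ ω, Z i ω ∂P
     let v : Fin N → ℝ := fun i => variance (Z i) P
     let μbar : (Fin N → Fin H) → Fin H → ℝ :=
       fun st h => (1 / (m : ℝ)) * ∑ i ∈ Dh st h, μZ i
     -- expected within-strata weighted sample variance of the Z's
     let EW : (Fin N → Fin H) → ℝ := fun st =>
       ∫ ω, (∑ h, (1 / (H : ℝ)) *
         ((1 / ((m : ℝ) - 1)) *
           ∑ i ∈ Dh st h, (Z i ω - (1 / (m : ℝ)) * ∑ j ∈ Dh st h, Z j ω) ^ 2)) ∂P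
     -- the k-means objective on the means
     let K : (Fin N → Fin H) → ℝ := fun st =>
       ∑ h, ⨅ c : ℝ, ∑ i ∈ Dh st h, (μZ i - c) ^ 2
     (∀ st, Good st →
        ((∀ st', Good st' → EW st ≤ EW st') ↔ (∀ st', Good st' → K st ≤ K st')))
     ∧ (∀ st, Good st →
          EW st = (1 / (N : ℝ)) * ∑ i, v i
            + ((m : ℝ) / ((N : ℝ) * ((m : ℝ) - 1)))
                * ∑ h, ∑ i ∈ Dh st h, (μZ i - μbar st h) ^ 2)
     ∧ (∀ st, Good st → ∀ h,
          ∑ i ∈ Dh st h, (μZ i - μbar st h) ^ 2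
            = ⨅ c : ℝ, ∑ i ∈ Dh st h, (μZ i - c) ^ 2)) := by
  intro Dh Good μZ v μbar EW K
  have hpos : 0 < (m : ℝ) / (N * ((m : ℝ) - 1)) := by
    have hm' : (2 : ℝ) ≤ m := by exact_mod_cast hm
    have hN : (0 : ℝ) < N := by rw [hNm]; positivity
    exact div_pos (by linarith) (mul_pos hN (by linarith))
  have hscatter : ∀ st, Good st → ∀ h,
      ∑ i ∈ Dh st h, (μZ i - μbar st h) ^ 2 = ⨅ c : ℝ, ∑ i ∈ Dh st h, (μZ i - c) ^ 2 :=
    fun st hst h => by simpa only [hst h] using sum_sq_sub_mean_eq_iInf (Dh st h) μZ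
  have hEW : ∀ st, Good st → EW st = 1 / (N : ℝ) * ∑ i, v i
      + (m : ℝ) / (N * ((m : ℝ) - 1)) * ∑ h, ∑ i ∈ Dh st h, (μZ i - μbar st h) ^ 2 :=
    fun st hst => by
      simpa only [Fintype.card_fin] using
        integral_weighted_stratified_sample_variance hL2 hindep st hm hst
  have hK : ∀ st, Good st → K st = ∑ h, ∑ i ∈ Dh st h, (μZ i - μbar st h) ^ 2 :=
    fun st hst => (sum_congr rfl fun h _ => hscatter st hst h).symm
  refine ⟨fun st hst => forall₂_congr fun st' hst' => ?_, hEW, hscatter⟩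
  rw [hEW st hst, hEW st' hst', hK st hst, hK st' hst', add_le_add_iff_left,
    mul_le_mul_iff_of_pos_left hpos]

/-- Corollary 1, equal-size strata: For `N = H·m` (`m ≥ 2`) and
independent square-integrable `Z_i`, among all partitions into `H` strata of size
exactly `m`, minimizing `E[∑_h (1/H) S²_{Z_h}]` is equivalent to minimizing the
k-means objective `∑_h ⨅_c ∑_{i∈D_h} (μ_i - c)²` on the means; indeed
`E[∑_h (1/H) S²_{Z_h}] = (1/N)∑ᵢ vᵢ + (m/(N(m-1))) ∑_h ∑_{i∈D_h} (μᵢ - μ̄_{D_h})²`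
and within each stratum the sum of squared deviations from the stratum mean attains
the infimum over centers. -/
theorem kmeans_equal_size_strata
    {Ω : Type*} [MeasurableSpace Ω] (P : Measure Ω) [IsProbabilityMeasure P]
    (N H m : ℕ) (hH : 1 ≤ H) (hm : 2 ≤ m) (hNm : N = H * m)
    (Z : Fin N → Ω → ℝ)
    (hmeas : ∀ i, Measurable (Z i))
    (hL2 : ∀ i, MemLp (Z i) 2 P)
    (hindep : iIndepFun Z P) :
    (let Dh : (Fin N → Fin H) → Fin H → Finset (Fin N) :=
       fun st h => univ.filter (fun i => st i = h)
     let Good : (Fin N → Fin H) → Prop := fun st => ∀ h, (Dh st h).card = m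
     let μZ : Fin N → ℝ := fun i => ∫ ω, Z i ω ∂P
     let v : Fin N → ℝ := fun i => variance (Z i) P
     let μbar : (Fin N → Fin H) → Fin H → ℝ :=
       fun st h => (1 / (m : ℝ)) * ∑ i ∈ Dh st h, μZ i
     -- expected within-strata weighted sample variance of the Z's
     let EW : (Fin N → Fin H) → ℝ := fun st =>
       ∫ ω, (∑ h, (1 / (H : ℝ)) *
         ((1 / ((m : ℝ) - 1)) *
           ∑ i ∈ Dh st h, (Z i ω - (1 / (m : ℝ)) * ∑ j ∈ Dh st h, Z j ω) ^ 2)) ∂P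
     -- the k-means objective on the means
     let K : (Fin N → Fin H) → ℝ := fun st =>
       ∑ h, ⨅ c : ℝ, ∑ i ∈ Dh st h, (μZ i - c) ^ 2
     (∀ st, Good st →
        ((∀ st', Good st' → EW st ≤ EW st') ↔ (∀ st', Good st' → K st ≤ K st')))
     ∧ (∀ st, Good st →
          EW st = (1 / (N : ℝ)) * ∑ i, v i
            + ((m : ℝ) / ((N : ℝ) * ((m : ℝ) - 1)))
                * ∑ h, ∑ i ∈ Dh st h, (μZ i - μbar st h) ^ 2)
     ∧ (∀ st, Good st → ∀ h,
          ∑ i ∈ Dh st h, (μZ i - μbar st h) ^ 2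
            = ⨅ c : ℝ, ∑ i ∈ Dh st h, (μZ i - c) ^ 2)) :=
  kmeans_equal_size_strata_general P N H m hH hm hNm Z hL2 hindep
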